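/- Neither the Case 2.1 pair nor the Case 2.2 pair of actions on the Kac–Paljutkin algebra H_8 is induced by a coquasitriangular structure: for each of these two matched pairs (⇀, ↼), there exists no coquasitriangular structure ℛ on H_8 such that a ⇀ b = ℛ⁻¹(a₁⊗b₁) b₂ ℛ(a₂⊗b₃) and a ↼ b = ℛ⁻¹(a₁⊗b₁) a₂ ℛ(a₃⊗b₂) for all a, b ∈ H_8. -/

import Mathlib

open TensorProduct

noncomputable section

variable (k H : Type) [Field k] [Ring H] [HopfAlgebra k H]

/-- The map `x ⊗ y ↦ Σ (x₁ ⊗ y₁) ⊗ (x₂ ⊗ y₂)` (Sweedler notation). -/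
def sweedler2 : H ⊗[k] H →ₗ[k] (H ⊗[k] H) ⊗[k] (H ⊗[k] H) :=
  (TensorProduct.tensorTensorTensorComm k H H H H).toLinearMap ∘ₗ
    TensorProduct.map Coalgebra.comul Coalgebra.comul

variable {k H}

/-- `f : H ⊗ H →ₗ H`, written `f (x ⊗ₜ y) = x ⇀ y`, is a left `H`-module coalgebra
action of `H` on itself. -/
structure IsLeftModuleCoalgebraAction (f : H ⊗[k] H →ₗ[k] H) : Prop where
  /-- `x ⇀ (y ⇀ w) = (xy) ⇀ w` -/
  mul_act : f ∘ₗ TensorProduct.map LinearMap.id f ∘ₗ (TensorProduct.assoc k H H H).toLinearMap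
    = f ∘ₗ TensorProduct.map (LinearMap.mul' k H) LinearMap.id
  /-- `1 ⇀ y = y` -/
  one_act : ∀ y : H, f ((1 : H) ⊗ₜ[k] y) = y
  /-- `Δ(x ⇀ y) = (x₁ ⇀ y₁) ⊗ (x₂ ⇀ y₂)` -/
  comul_comp : Coalgebra.comul ∘ₗ f = TensorProduct.map f f ∘ₗ sweedler2 k H
  /-- `ε(x ⇀ y) = ε(x)ε(y)` -/
  counit_comp : Coalgebra.counit ∘ₗ f
    = (TensorProduct.lid k k).toLinearMap ∘ₗ
        TensorProduct.map Coalgebra.counit Coalgebra.counit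

/-- `g : H ⊗ H →ₗ H`, written `g (x ⊗ₜ y) = x ↼ y`, is a right `H`-module coalgebra
action of `H` on itself. -/
structure IsRightModuleCoalgebraAction (g : H ⊗[k] H →ₗ[k] H) : Prop where
  /-- `(x ↼ y) ↼ w = x ↼ (yw)` -/
  act_mul : g ∘ₗ TensorProduct.map g LinearMap.id
    = g ∘ₗ TensorProduct.map LinearMap.id (LinearMap.mul' k H) ∘ₗ
        (TensorProduct.assoc k H H H).toLinearMap
  /-- `x ↼ 1 = x` -/
  act_one : ∀ x : H, g (x ⊗ₜ[k] (1 : H)) = x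
  /-- `Δ(x ↼ y) = (x₁ ↼ y₁) ⊗ (x₂ ↼ y₂)` -/
  comul_comp : Coalgebra.comul ∘ₗ g = TensorProduct.map g g ∘ₗ sweedler2 k H
  /-- `ε(x ↼ y) = ε(x)ε(y)` -/
  counit_comp : Coalgebra.counit ∘ₗ g
    = (TensorProduct.lid k k).toLinearMap ∘ₗ
        TensorProduct.map Coalgebra.counit Coalgebra.counit

/-- `(f, g)` (written `f (x ⊗ₜ y) = x ⇀ y` and `g (x ⊗ₜ y) = x ↼ y`) is a matched pair
of actions on the Hopf algebra `H`. -/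
structure IsMatchedPairOfActions (f g : H ⊗[k] H →ₗ[k] H) : Prop where
  left : IsLeftModuleCoalgebraAction f
  right : IsRightModuleCoalgebraAction g
  /-- `x ⇀ (ab) = (x₁ ⇀ a₁)((x₂ ↼ a₂) ⇀ b)` -/
  mp1 : f ∘ₗ TensorProduct.map LinearMap.id (LinearMap.mul' k H) ∘ₗ
      (TensorProduct.assoc k H H H).toLinearMap
    = LinearMap.mul' k H ∘ₗ
        TensorProduct.map f (f ∘ₗ TensorProduct.map g LinearMap.id) ∘ₗ
        (TensorProduct.assoc k (H ⊗[k] H) (H ⊗[k] H) H).toLinearMap ∘ₗ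
        TensorProduct.map (sweedler2 k H) LinearMap.id
  /-- `x ⇀ 1 = ε(x)1` -/
  mp2 : ∀ x : H, f (x ⊗ₜ[k] (1 : H)) = Coalgebra.counit (R := k) x • (1 : H)
  /-- `(xy) ↼ a = (x ↼ (y₁ ⇀ a₁))(y₂ ↼ a₂)` -/
  mp3 : g ∘ₗ TensorProduct.map (LinearMap.mul' k H) LinearMap.id
    = LinearMap.mul' k H ∘ₗ
        TensorProduct.map (g ∘ₗ TensorProduct.map LinearMap.id f) g ∘ₗ
        (TensorProduct.assoc k H (H ⊗[k] H) (H ⊗[k] H)).symm.toLinearMap ∘ₗ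
        TensorProduct.map LinearMap.id (sweedler2 k H) ∘ₗ
        (TensorProduct.assoc k H H H).toLinearMap
  /-- `1 ↼ a = ε(a)1` -/
  mp4 : ∀ a : H, g ((1 : H) ⊗ₜ[k] a) = Coalgebra.counit (R := k) a • (1 : H)
  /-- `(x₁ ⇀ a₁) ⊗ (x₂ ↼ a₂) = (x₂ ⇀ a₂) ⊗ (x₁ ↼ a₁)` -/
  mp5 : TensorProduct.map f g ∘ₗ sweedler2 k H
    = TensorProduct.map f g ∘ₗ
        (TensorProduct.comm k (H ⊗[k] H) (H ⊗[k] H)).toLinearMap ∘ₗ sweedler2 k H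
  /-- `xy = (x₁ ⇀ y₁)(x₂ ↼ y₂)` -/
  factor : LinearMap.mul' k H
    = LinearMap.mul' k H ∘ₗ TensorProduct.map f g ∘ₗ sweedler2 k H

variable (k H)

/-- The Yang–Baxter operator `r (x ⊗ₜ y) = (x₁ ⇀ y₁) ⊗ (x₂ ↼ y₂)` associated to a
matched pair of actions. -/
def ybOp (f g : H ⊗[k] H →ₗ[k] H) : H ⊗[k] H →ₗ[k] H ⊗[k] H :=
  TensorProduct.map f g ∘ₗ sweedler2 k H

end
noncomputable section

variable (k H : Type) [Field k] [Ring H] [HopfAlgebra k H]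

/-- Convolution product of two linear forms on the coalgebra `H ⊗ H`. -/
def convProd (φ ψ : H ⊗[k] H →ₗ[k] k) : H ⊗[k] H →ₗ[k] k :=
  LinearMap.mul' k k ∘ₗ TensorProduct.map φ ψ ∘ₗ sweedler2 k H

/-- The counit of the coalgebra `H ⊗ H`, the unit for convolution. -/
def convUnit : H ⊗[k] H →ₗ[k] k :=
  (TensorProduct.lid k k).toLinearMap ∘ₗ
    TensorProduct.map Coalgebra.counit Coalgebra.counit

variable {k H}

/-- `R` is a coquasitriangular structure on the Hopf algebra `H`, with convolution
inverse `Rinv`. -/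
structure IsCoquasitriangular (R Rinv : H ⊗[k] H →ₗ[k] k) : Prop where
  conv_inv_right : convProd k H R Rinv = convUnit k H
  conv_inv_left : convProd k H Rinv R = convUnit k H
  /-- `R(a₁ ⊗ b₁)a₂b₂ = b₁a₁R(a₂ ⊗ b₂)` -/
  cqt1 : (TensorProduct.lid k H).toLinearMap ∘ₗ
      TensorProduct.map R (LinearMap.mul' k H) ∘ₗ sweedler2 k H
    = (TensorProduct.rid k H).toLinearMap ∘ₗ
        TensorProduct.map
          (LinearMap.mul' k H ∘ₗ (TensorProduct.comm k H H).toLinearMap) R ∘ₗ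
        sweedler2 k H
  /-- `R(a ⊗ bc) = R(a₁ ⊗ c)R(a₂ ⊗ b)` -/
  cqt2 : R ∘ₗ TensorProduct.map LinearMap.id (LinearMap.mul' k H)
    = LinearMap.mul' k k ∘ₗ TensorProduct.map R R ∘ₗ
        (TensorProduct.tensorTensorTensorComm k H H H H).toLinearMap ∘ₗ
        TensorProduct.map Coalgebra.comul LinearMap.id ∘ₗ
        TensorProduct.map LinearMap.id (TensorProduct.comm k H H).toLinearMap
  /-- `R(ab ⊗ c) = R(a ⊗ c₁)R(b ⊗ c₂)` -/
  cqt3 : R ∘ₗ TensorProduct.map (LinearMap.mul' k H) LinearMap.id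
    = LinearMap.mul' k k ∘ₗ TensorProduct.map R R ∘ₗ
        (TensorProduct.tensorTensorTensorComm k H H H H).toLinearMap ∘ₗ
        TensorProduct.map LinearMap.id Coalgebra.comul

variable (k H)

/-- `x ⊗ y ↦ Σ R(x₁ ⊗ y₁) • (x₂ ⊗ y₂)`. -/
def cqtStep (R : H ⊗[k] H →ₗ[k] k) : H ⊗[k] H →ₗ[k] H ⊗[k] H :=
  (TensorProduct.lid k (H ⊗[k] H)).toLinearMap ∘ₗ
    TensorProduct.map R LinearMap.id ∘ₗ sweedler2 k H

/-- The left action `a ⇀ b = R⁻¹(a₁ ⊗ b₁) b₂ R(a₂ ⊗ b₃)` induced by a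
coquasitriangular structure. -/
def cqtLeftAction (R Rinv : H ⊗[k] H →ₗ[k] k) : H ⊗[k] H →ₗ[k] H :=
  ((TensorProduct.rid k H).toLinearMap ∘ₗ
    TensorProduct.map LinearMap.id R ∘ₗ
    (TensorProduct.leftComm k H H H).toLinearMap ∘ₗ
    TensorProduct.map LinearMap.id Coalgebra.comul) ∘ₗ
  cqtStep k H Rinv

/-- The right action `a ↼ b = R⁻¹(a₁ ⊗ b₁) a₂ R(a₃ ⊗ b₂)` induced by a
coquasitriangular structure. -/
def cqtRightAction (R Rinv : H ⊗[k] H →ₗ[k] k) : H ⊗[k] H →ₗ[k] H :=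
  ((TensorProduct.rid k H).toLinearMap ∘ₗ
    TensorProduct.map LinearMap.id R ∘ₗ
    (TensorProduct.assoc k H H H).toLinearMap ∘ₗ
    TensorProduct.map Coalgebra.comul LinearMap.id) ∘ₗ
  cqtStep k H Rinv

end
noncomputable section

/-! ### The Kac–Paljutkin algebra `H₈`, characterized by generators and relations.

A Hopf algebra `H` over `k` together with elements `g h z : H` and a basis
`b = (1, g, h, gh, z, gz, hz, ghz)` satisfying the defining relations of the
Kac–Paljutkin algebra.  Since the comultiplication, counit and antipode of a Hopf
algebra are (anti)algebra morphisms, these data determine the whole Hopf algebra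
structure of `H₈`. -/
structure IsKacPaljutkin (k H : Type) [Field k] [Ring H] [HopfAlgebra k H]
    (g h z : H) (b : Module.Basis (Fin 8) k H) : Prop where
  basis_eq : ⇑b = ![1, g, h, g * h, z, g * z, h * z, g * h * z]
  g_sq : g * g = 1
  h_sq : h * h = 1
  z_sq : z * z = (2 : k)⁻¹ • (1 + g + h - g * h)
  gh_comm : g * h = h * g
  zg : z * g = h * z
  zh : z * h = g * z
  comul_g : Coalgebra.comul (R := k) g = g ⊗ₜ[k] g
  comul_h : Coalgebra.comul (R := k) h = h ⊗ₜ[k] h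
  comul_z : Coalgebra.comul (R := k) z
    = (2 : k)⁻¹ • (z ⊗ₜ[k] z + (g * z) ⊗ₜ[k] z + z ⊗ₜ[k] (h * z) - (g * z) ⊗ₜ[k] (h * z))
  counit_g : Coalgebra.counit (R := k) g = 1
  counit_h : Coalgebra.counit (R := k) h = 1
  counit_z : Coalgebra.counit (R := k) z = 1
  antipode_g : HopfAlgebra.antipode (R := k) g = g
  antipode_h : HopfAlgebra.antipode (R := k) h = h
  antipode_z : HopfAlgebra.antipode (R := k) z = z

/-- The element `z³ = (1/2)(z + gz + hz - ghz)` of the Kac–Paljutkin algebra. -/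
def zCubed (k : Type) {H : Type} [Field k] [Ring H] [HopfAlgebra k H] (g h z : H) : H :=
  (2 : k)⁻¹ • (z + g * z + h * z - g * h * z)

end
noncomputable section

variable (k H : Type) [Field k] [Ring H] [HopfAlgebra k H]

/-- The linear form returning the sum of the coordinates on `1, g, h, gh`. -/
def grpCoeff (b : Module.Basis (Fin 8) k H) : H →ₗ[k] k :=
  b.coord 0 + b.coord 1 + b.coord 2 + b.coord 3

/-- The linear form returning the sum of the coordinates on `z, gz, hz, ghz`. -/
def zptCoeff (b : Module.Basis (Fin 8) k H) : H →ₗ[k] k :=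
  b.coord 4 + b.coord 5 + b.coord 6 + b.coord 7

/-- The left action `x ⇀ y` which is `y` for `x ∈ {1, g, h, gh}` and `φ(y)` for
`x ∈ {z, gz, hz, ghz}`, extended bilinearly. -/
def caseLeftAction (b : Module.Basis (Fin 8) k H) (φ : H →ₗ[k] H) : H ⊗[k] H →ₗ[k] H :=
  (TensorProduct.lid k H).toLinearMap ∘ₗ
      TensorProduct.map (grpCoeff k H b) LinearMap.id
    + (TensorProduct.lid k H).toLinearMap ∘ₗ TensorProduct.map (zptCoeff k H b) φ

/-- The right action `y ↼ x` which is `y` for `x ∈ {1, g, h, gh}` and `φ(y)` for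
`x ∈ {z, gz, hz, ghz}`, extended bilinearly. -/
def caseRightAction (b : Module.Basis (Fin 8) k H) (φ : H →ₗ[k] H) : H ⊗[k] H →ₗ[k] H :=
  caseLeftAction k H b φ ∘ₗ (TensorProduct.comm k H H).toLinearMap

/-- The map `φ` of Case 2.1: `φ(1) = 1`, `φ(g) = h`, `φ(h) = g`, `φ(gh) = gh`,
`φ(z) = z³`, `φ(gz) = hz³`, `φ(hz) = gz³`, `φ(ghz) = ghz³`. -/
def case21Map (g h z : H) (b : Module.Basis (Fin 8) k H) : H →ₗ[k] H :=
  b.constr k ![1, h, g, g * h, zCubed k g h z,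
    h * zCubed k g h z, g * zCubed k g h z, g * h * zCubed k g h z]

/-- The map `ψ` of Case 2.2: `ψ(1) = 1`, `ψ(g) = h`, `ψ(h) = g`, `ψ(gh) = gh`,
`ψ(z) = ghz³`, `ψ(gz) = gz³`, `ψ(hz) = hz³`, `ψ(ghz) = z³`. -/
def case22Map (g h z : H) (b : Module.Basis (Fin 8) k H) : H →ₗ[k] H :=
  b.constr k ![1, h, g, g * h, g * h * zCubed k g h z,
    g * zCubed k g h z, h * zCubed k g h z, zCubed k g h z]

end

/-! For a grouplike `x`, the left action induced by a coquasitriangular structure is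
`a ⇀ x = R⁻¹(a₁ ⊗ x) R(a₂ ⊗ x) x = (R⁻¹ * R)(a ⊗ x) x = ε(a) x`, so it would give `z ⇀ g = g`.
In both cases, however, `z ⇀ g = φ(g) = h`. -/

section

variable {k H : Type} [Field k] [Ring H] [HopfAlgebra k H]

lemma cqtLeftAction_tmul_eq_convProd_smul (R Rinv : H ⊗[k] H →ₗ[k] k) {x : H}
    (hx : Coalgebra.comul (R := k) x = x ⊗ₜ[k] x) (a : H) :
    cqtLeftAction k H R Rinv (a ⊗ₜ[k] x) = convProd k H Rinv R (a ⊗ₜ[k] x) • x := by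
  simp only [cqtLeftAction, cqtStep, convProd, sweedler2, LinearMap.comp_apply,
    TensorProduct.map_tmul, hx, LinearEquiv.coe_coe]
  generalize Coalgebra.comul (R := k) a = t
  induction t using TensorProduct.induction_on with
  | zero => simp
  | tmul a₁ a₂ => simp [hx, mul_smul]
  | add s t hs ht => simp only [TensorProduct.add_tmul, map_add, hs, ht, add_smul]

lemma IsCoquasitriangular.cqtLeftAction_tmul_eq_counit_smul {R Rinv : H ⊗[k] H →ₗ[k] k}
    (hR : IsCoquasitriangular R Rinv) {x : H} (hx : Coalgebra.comul (R := k) x = x ⊗ₜ[k] x)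
    (a : H) :
    cqtLeftAction k H R Rinv (a ⊗ₜ[k] x)
      = (Coalgebra.counit (R := k) a * Coalgebra.counit (R := k) x) • x := by
  rw [cqtLeftAction_tmul_eq_convProd_smul R Rinv hx, hR.conv_inv_left]
  simp [convUnit]

lemma caseLeftAction_basis_tmul {b : Module.Basis (Fin 8) k H} (φ : H →ₗ[k] H) {i : Fin 8}
    (hi : 4 ≤ i) (y : H) : caseLeftAction k H b φ (b i ⊗ₜ[k] y) = φ y := by
  simp only [caseLeftAction, grpCoeff, zptCoeff, LinearMap.add_apply, LinearMap.comp_apply,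
    TensorProduct.map_tmul, LinearEquiv.coe_coe, TensorProduct.lid_tmul, LinearMap.id_coe,
    id_eq, Module.Basis.coord_apply, Module.Basis.repr_self]
  fin_cases i <;> simp_all [Fin.le_def]

lemma caseLeftAction_ne_cqtLeftAction {b : Module.Basis (Fin 8) k H} {φ : H →ₗ[k] H}
    {i : Fin 8} (hi : 4 ≤ i) (hεi : Coalgebra.counit (R := k) (b i) = 1) {x : H}
    (hx : Coalgebra.comul (R := k) x = x ⊗ₜ[k] x) (hεx : Coalgebra.counit (R := k) x = 1)
    (hφx : φ x ≠ x) {R Rinv : H ⊗[k] H →ₗ[k] k} (hR : IsCoquasitriangular R Rinv) :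
    caseLeftAction k H b φ ≠ cqtLeftAction k H R Rinv := by
  intro hL
  have := LinearMap.congr_fun hL (b i ⊗ₜ[k] x)
  rw [caseLeftAction_basis_tmul φ hi, hR.cqtLeftAction_tmul_eq_counit_smul hx, hεi, hεx,
    mul_one, one_smul] at this
  exact hφx this

end

theorem case21_case22_not_from_cqt_general {k H : Type} [Field k]
    [Ring H] [HopfAlgebra k H] (g h z : H) (b : Module.Basis (Fin 8) k H)
    (hKP : IsKacPaljutkin k H g h z b) :
    (¬ ∃ R Rinv : H ⊗[k] H →ₗ[k] k, IsCoquasitriangular R Rinv ∧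
        caseLeftAction k H b (case21Map k H g h z b) = cqtLeftAction k H R Rinv ∧
        caseRightAction k H b (case21Map k H g h z b) = cqtRightAction k H R Rinv) ∧
    (¬ ∃ R Rinv : H ⊗[k] H →ₗ[k] k, IsCoquasitriangular R Rinv ∧
        caseLeftAction k H b (case22Map k H g h z b) = cqtLeftAction k H R Rinv ∧
        caseRightAction k H b (case22Map k H g h z b) = cqtRightAction k H R Rinv) := by
  have hg : g = b 1 := by rw [hKP.basis_eq]; rfl
  have hh : h = b 2 := by rw [hKP.basis_eq]; rfl
  have hz : b 4 = z := by rw [hKP.basis_eq]; rfl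
  have hεz : Coalgebra.counit (R := k) (b 4) = 1 := hz ▸ hKP.counit_z
  have hhg : h ≠ g := by rw [hg, hh]; exact b.injective.ne (by decide)
  have h21 : case21Map k H g h z b g = h := by
    rw [case21Map, hg, Module.Basis.constr_basis]; rfl
  have h22 : case22Map k H g h z b g = h := by
    rw [case22Map, hg, Module.Basis.constr_basis]; rfl
  constructor <;> rintro ⟨R, Rinv, hR, hL, -⟩
  · exact caseLeftAction_ne_cqtLeftAction (by decide) hεz hKP.comul_g hKP.counit_g
      (by rwa [h21]) hR hL
  · exact caseLeftAction_ne_cqtLeftAction (by decide) hεz hKP.comul_g hKP.counit_g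
      (by rwa [h22]) hR hL

/-- Neither the Case 2.1 pair nor the Case 2.2 pair of actions on the Kac–Paljutkin
algebra `H₈` is induced by a coquasitriangular structure on `H₈`. -/
theorem case21_case22_not_from_cqt {k H : Type} [Field k] [CharZero k] [IsAlgClosed k]
    [Ring H] [HopfAlgebra k H] (g h z : H) (b : Module.Basis (Fin 8) k H)
    (hKP : IsKacPaljutkin k H g h z b) :
    (¬ ∃ R Rinv : H ⊗[k] H →ₗ[k] k, IsCoquasitriangular R Rinv ∧
        caseLeftAction k H b (case21Map k H g h z b) = cqtLeftAction k H R Rinv ∧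
        caseRightAction k H b (case21Map k H g h z b) = cqtRightAction k H R Rinv) ∧
    (¬ ∃ R Rinv : H ⊗[k] H →ₗ[k] k, IsCoquasitriangular R Rinv ∧
        caseLeftAction k H b (case22Map k H g h z b) = cqtLeftAction k H R Rinv ∧
        caseRightAction k H b (case22Map k H g h z b) = cqtRightAction k H R Rinv) :=
  case21_case22_not_from_cqt_general g h z b hKP
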